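/- arXiv:1708.00359 — 3 statements merged into one kernel-verified Lean document; each statement's English description precedes it below -/
import Mathlib

section
/- Let G be a group, (H, f) a G-group, and I_1, …, I_n normal subgroups of H such that I_1 ∩ I_2 ∩ … ∩ I_n = {1} and such that for all j ≠ k the subgroup generated by I_j and I_k is all of H (I_j ⊔ I_k = ⊤, equivalently I_j·I_k = H). Then Spec²_G(H) is the disjoint union of the sets V²_H(I_1), …, V²_H(I_n); that is, Spec²_G(H) = ⋃_{j=1}^{n} V²_H(I_j), and V²_H(I_j) ∩ V²_H(I_k) = ∅ whenever j ≠ k. -/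
/-- The subgroup `G(x)` of `H` generated by the `G`-conjugates `f g * x * (f g)⁻¹` of `x`. -/
def GConj {G H : Type*} [Group G] [Group H] (f : G →* H) (x : H) : Subgroup H :=
  Subgroup.closure {h : H | ∃ g : G, h = f g * x * (f g)⁻¹}

/-- `x` is a T1-divisor of zero of the `G`-group `(H, f)`. -/
def IsT1DivisorOfZero {G H : Type*} [Group G] [Group H] (f : G →* H) (x : H) : Prop :=
  x ≠ 1 ∧ ∃ y : H, y ≠ 1 ∧ ⁅GConj f x, GConj f y⁆ = ⊥

/-- `x` is a T2-divisor of zero of the `G`-group `(H, f)`. -/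
def IsT2DivisorOfZero {G H : Type*} [Group G] [Group H] (f : G →* H) (x : H) : Prop :=
  x ≠ 1 ∧ ∃ y : H, y ≠ 1 ∧ GConj f x ⊓ GConj f y = ⊥

/-- `I` is a T1-prime ideal of the `G`-group `(H, f)`: a normal subgroup, distinct from `H`,
such that `⁅G(x), G(y)⁆ ⊆ I` implies `x ∈ I` or `y ∈ I`. -/
def IsT1Prime {G H : Type*} [Group G] [Group H] (f : G →* H) (I : Subgroup H) : Prop :=
  I.Normal ∧ I ≠ ⊤ ∧ ∀ x y : H, ⁅GConj f x, GConj f y⁆ ≤ I → x ∈ I ∨ y ∈ I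

/-- `I` is a T2-prime ideal of the `G`-group `(H, f)`: a normal subgroup, distinct from `H`,
such that `G(x) ∩ G(y) ⊆ I` implies `x ∈ I` or `y ∈ I`. -/
def IsT2Prime {G H : Type*} [Group G] [Group H] (f : G →* H) (I : Subgroup H) : Prop :=
  I.Normal ∧ I ≠ ⊤ ∧ ∀ x y : H, GConj f x ⊓ GConj f y ≤ I → x ∈ I ∨ y ∈ I

/-- The T1-spectrum of the `G`-group `(H, f)`: the type of T1-prime ideals. -/
abbrev Spec1 {G H : Type*} [Group G] [Group H] (f : G →* H) : Type _ :=
  {P : Subgroup H // IsT1Prime f P}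

/-- The T2-spectrum of the `G`-group `(H, f)`: the type of T2-prime ideals. -/
abbrev Spec2 {G H : Type*} [Group G] [Group H] (f : G →* H) : Type _ :=
  {P : Subgroup H // IsT2Prime f P}

/-- `V¹_H(I)`: the set of T1-prime ideals containing `I`. -/
def V1 {G H : Type*} [Group G] [Group H] (f : G →* H) (I : Subgroup H) : Set (Spec1 f) :=
  {P | I ≤ P.val}

/-- `V²_H(I)`: the set of T2-prime ideals containing `I`. -/
def V2 {G H : Type*} [Group G] [Group H] (f : G →* H) (I : Subgroup H) : Set (Spec2 f) :=
  {P | I ≤ P.val}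

/-! A T2-prime ideal `P` behaves like a prime ideal of a ring towards normal subgroups: if
`I ⊓ J ≤ P` but some `x ∈ I` lies outside `P`, then for every `y ∈ J` we have
`G(x) ⊓ G(y) ≤ I ⊓ J ≤ P`, so `y ∈ P`. By induction `P` contains some `I j` whenever it contains
the finite intersection `⨅ j, I j = ⊥`, which covers the spectrum; and no proper `P` can contain
two of the `I j`, since they generate `H`. -/

theorem GConj_le_of_mem {G H : Type*} [Group G] [Group H] (f : G →* H) {I : Subgroup H}
    (hI : I.Normal) {x : H} (hx : x ∈ I) : GConj f x ≤ I := by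
  refine (Subgroup.closure_le _).mpr ?_
  rintro _ ⟨g, rfl⟩
  exact hI.conj_mem x hx (f g)

theorem Subgroup.Normal.finset_inf {H ι : Type*} [Group H] {s : Finset ι} {I : ι → Subgroup H}
    (hI : ∀ j ∈ s, (I j).Normal) : (s.inf I).Normal :=
  Finset.inf_induction (p := Subgroup.Normal) Subgroup.normal_top
    (fun _ hJ _ hK => @Subgroup.normal_inf_normal _ _ _ _ hJ hK) hI

namespace IsT2Prime

variable {G H : Type*} [Group G] [Group H] {f : G →* H} {P : Subgroup H}

theorem le_or_le_of_inf_le (hP : IsT2Prime f P) {I J : Subgroup H} (hI : I.Normal)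
    (hJ : J.Normal) (h : I ⊓ J ≤ P) : I ≤ P ∨ J ≤ P := by
  refine or_iff_not_imp_left.mpr fun hIP y hy => ?_
  obtain ⟨x, hxI, hxP⟩ := SetLike.not_le_iff_exists.mp hIP
  have hGxy : GConj f x ⊓ GConj f y ≤ P :=
    (inf_le_inf (GConj_le_of_mem f hI hxI) (GConj_le_of_mem f hJ hy)).trans h
  exact (hP.2.2 x y hGxy).resolve_left hxP

theorem exists_le_of_finset_inf_le (hP : IsT2Prime f P) {ι : Type*} (s : Finset ι)
    {I : ι → Subgroup H} (hI : ∀ j ∈ s, (I j).Normal) (h : s.inf I ≤ P) :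
    ∃ j ∈ s, I j ≤ P := by
  induction s using Finset.cons_induction with
  | empty => exact absurd (top_le_iff.mp h) hP.2.1
  | cons a s ha ih =>
    have hIs : ∀ j ∈ s, (I j).Normal := fun j hj => hI j (Finset.mem_cons_of_mem hj)
    rw [Finset.inf_cons] at h
    rcases hP.le_or_le_of_inf_le (hI a (Finset.mem_cons_self a s))
      (Subgroup.Normal.finset_inf hIs) h with ha | hs
    · exact ⟨a, Finset.mem_cons_self a s, ha⟩
    · obtain ⟨j, hj, hjP⟩ := ih hIs hs
      exact ⟨j, Finset.mem_cons_of_mem hj, hjP⟩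

theorem exists_le_of_iInf_le (hP : IsT2Prime f P) {ι : Type*} [Fintype ι] {I : ι → Subgroup H}
    (hI : ∀ j, (I j).Normal) (h : ⨅ j, I j ≤ P) : ∃ j, I j ≤ P := by
  rw [← Finset.inf_univ_eq_iInf] at h
  obtain ⟨j, -, hj⟩ := hP.exists_le_of_finset_inf_le Finset.univ (fun j _ => hI j) h
  exact ⟨j, hj⟩

theorem not_sup_le (hP : IsT2Prime f P) {I J : Subgroup H} (hIJ : I ⊔ J = ⊤) :
    ¬(I ≤ P ∧ J ≤ P) := fun ⟨hI, hJ⟩ =>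
  hP.2.1 (top_le_iff.mp (hIJ ▸ sup_le hI hJ))

end IsT2Prime

theorem spec2_disjoint_union {G H : Type*} [Group G] [Group H] (f : G →* H) (n : ℕ)
    (I : Fin n → Subgroup H) (hnorm : ∀ j, (I j).Normal)
    (hinf : (⨅ j, I j) = ⊥) (hsup : ∀ j k, j ≠ k → I j ⊔ I k = ⊤) :
    (⋃ j, V2 f (I j)) = Set.univ ∧ ∀ j k, j ≠ k → V2 f (I j) ∩ V2 f (I k) = ∅ := by
  refine ⟨Set.eq_univ_of_forall fun P => ?_, fun j k hjk => ?_⟩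
  · exact Set.mem_iUnion.mpr (P.2.exists_le_of_iInf_le hnorm (hinf ▸ bot_le))
  · exact Set.eq_empty_of_forall_notMem fun P hP => P.2.not_sup_le (hsup j k hjk) hP
end

section
/- Let G be a group, (H, f) a G-group, and I a normal subgroup of H such that ⋂_{P ∈ V¹_H(I)} P = I (the intersection being taken as ⊤ if V¹_H(I) is empty). Say that V¹_H(I) is irreducible if it is nonempty and for all normal subgroups J, K of H, V¹_H(I) ⊆ V¹_H(J) ∪ V¹_H(K) implies V¹_H(I) ⊆ V¹_H(J) or V¹_H(I) ⊆ V¹_H(K). Then V¹_H(I) is irreducible if and only if I is a T1-prime ideal of (H, f). -/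
/-- `V¹_H(I)` as a set of subgroups of `H`. -/
def V1set {G H : Type*} [Group G] [Group H] (f : G →* H) (I : Subgroup H) :
    Set (Subgroup H) :=
  {P | IsT1Prime f P ∧ I ≤ P}


lemma mem_GConj_self {G H : Type*} [Group G] [Group H] (f : G →* H) (x : H) :
    x ∈ GConj f x :=
  Subgroup.subset_closure ⟨1, by simp⟩

theorem V1_irreducible_iff_t1_prime {G H : Type*} [Group G] [Group H] (f : G →* H)
    (I : Subgroup H) (hI : I.Normal) (hrad : sInf (V1set f I) = I) :
    ((V1set f I).Nonempty ∧ ∀ J K : Subgroup H, J.Normal → K.Normal →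
        V1set f I ⊆ V1set f J ∪ V1set f K →
        V1set f I ⊆ V1set f J ∨ V1set f I ⊆ V1set f K) ↔
      IsT1Prime f I := by
  constructor
  · rintro ⟨⟨P, hP, hIP⟩, hirr⟩
    refine ⟨hI, ?_, ?_⟩
    · rintro rfl
      exact hP.2.1 (top_le_iff.mp hIP)
    · intro x y hxy
      have hsub : V1set f I ⊆ V1set f (Subgroup.normalClosure {x}) ∪
          V1set f (Subgroup.normalClosure {y}) := by
        rintro Q ⟨hQ, hIQ⟩
        haveI := hQ.1
        rcases hQ.2.2 x y (hxy.trans hIQ) with h | h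
        · exact Or.inl ⟨hQ, Subgroup.normalClosure_le_normal (by simpa using h)⟩
        · exact Or.inr ⟨hQ, Subgroup.normalClosure_le_normal (by simpa using h)⟩
      rcases hirr _ _ Subgroup.normalClosure_normal Subgroup.normalClosure_normal hsub
        with h | h
      · left
        rw [← hrad, Subgroup.mem_sInf]
        intro Q hQ
        exact (h hQ).2 (Subgroup.subset_normalClosure rfl)
      · right
        rw [← hrad, Subgroup.mem_sInf]
        intro Q hQ
        exact (h hQ).2 (Subgroup.subset_normalClosure rfl)
  · intro hIp
    have hself : I ∈ V1set f I := ⟨hIp, le_rfl⟩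
    refine ⟨⟨I, hself⟩, fun J K _ _ hsub => ?_⟩
    rcases hsub hself with ⟨_, hJ⟩ | ⟨_, hK⟩
    · exact Or.inl fun Q hQ => ⟨hQ.1, hJ.trans hQ.2⟩
    · exact Or.inr fun Q hQ => ⟨hQ.1, hK.trans hQ.2⟩
end

section
/- Let G be a nontrivial group such that the G-group (G, id) has no T1-divisors of zero (i.e., (G, id) is T1-integral). Let V = Var_G(I₀) ⊆ Gⁿ for some normal subgroup I₀ of G[X_1,…,X_n], and suppose V is nonempty and irreducible in the following sense: for all normal subgroups J, K of G[X_1,…,X_n], V ⊆ Var_G(J) ∪ Var_G(K) implies V ⊆ Var_G(J) or V ⊆ Var_G(K). Then I_V := ⋂_{x∈V} I_x is a T1-prime ideal of the G-group (G[X_1,…,X_n], inl). -/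
/-- The evaluation homomorphism `e_x : G[X_1,…,X_n] → G` : identity on `G`, sends `X_i` to `x i`. -/
def evalHom {G : Type*} [Group G] {n : ℕ} (x : Fin n → G) :
    Monoid.Coprod G (FreeGroup (Fin n)) →* G :=
  Monoid.Coprod.lift (MonoidHom.id G) (FreeGroup.lift x)

/-- The affine `G`-variety associated to a normal subgroup `I` of `G[X_1,…,X_n]`. -/
def VarG {G : Type*} [Group G] {n : ℕ} (I : Subgroup (Monoid.Coprod G (FreeGroup (Fin n)))) :
    Set (Fin n → G) :=
  {x | ∀ P ∈ I, evalHom x P = 1}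


lemma evalHom_inl' {G : Type*} [Group G] {n : ℕ} (x : Fin n → G) (g : G) :
    evalHom x (Monoid.Coprod.inl g) = g := by
  simp [evalHom]

lemma map_GConj' {G : Type*} [Group G] {n : ℕ} (x : Fin n → G)
    (P : Monoid.Coprod G (FreeGroup (Fin n))) :
    Subgroup.map (evalHom x) (GConj Monoid.Coprod.inl P)
      = GConj (MonoidHom.id G) (evalHom x P) := by
  unfold GConj
  rw [MonoidHom.map_closure]
  congr 1
  ext h
  constructor
  · rintro ⟨_, ⟨g, rfl⟩, rfl⟩
    exact ⟨g, by simp [evalHom_inl']⟩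
  · rintro ⟨g, rfl⟩
    exact ⟨Monoid.Coprod.inl g * P * (Monoid.Coprod.inl g)⁻¹, ⟨g, rfl⟩,
      by simp [evalHom_inl']⟩

theorem IV_t1_prime_of_irreducible {G : Type*} [Group G] [Nontrivial G]
    (hG : ∀ x : G, ¬ IsT1DivisorOfZero (MonoidHom.id G) x) (n : ℕ)
    (I₀ : Subgroup (Monoid.Coprod G (FreeGroup (Fin n)))) (hI₀ : I₀.Normal)
    (hne : (VarG I₀).Nonempty)
    (hirr : ∀ J K : Subgroup (Monoid.Coprod G (FreeGroup (Fin n))), J.Normal → K.Normal →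
      VarG I₀ ⊆ VarG J ∪ VarG K → VarG I₀ ⊆ VarG J ∨ VarG I₀ ⊆ VarG K) :
    IsT1Prime (Monoid.Coprod.inl : G →* Monoid.Coprod G (FreeGroup (Fin n)))
      (⨅ x ∈ VarG I₀, MonoidHom.ker (evalHom x)) := by
  obtain ⟨x₀, hx₀⟩ := hne
  refine ⟨⟨?_⟩, ?_, ?_⟩
  · intro a ha g
    simp only [Subgroup.mem_iInf, MonoidHom.mem_ker] at ha ⊢
    intro x hx
    simp [ha x hx]
  · intro h
    obtain ⟨g, hg⟩ := exists_ne (1 : G)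
    have : Monoid.Coprod.inl g ∈ (⨅ x ∈ VarG I₀, MonoidHom.ker (evalHom x)) :=
      h ▸ Subgroup.mem_top _
    simp only [Subgroup.mem_iInf, MonoidHom.mem_ker] at this
    exact hg (by simpa [evalHom_inl'] using this x₀ hx₀)
  · intro P Q hPQ
    by_contra hcon
    push_neg at hcon
    obtain ⟨hP, hQ⟩ := hcon
    simp only [Subgroup.mem_iInf, MonoidHom.mem_ker] at hP hQ
    push_neg at hP hQ
    obtain ⟨a, ha, haP⟩ := hP
    obtain ⟨b, hb, hbQ⟩ := hQ
    have key : ∀ x ∈ VarG I₀, evalHom x P = 1 ∨ evalHom x Q = 1 := by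
      intro x hx
      by_contra h
      push_neg at h
      refine hG (evalHom x P) ⟨h.1, evalHom x Q, h.2, ?_⟩
      rw [← map_GConj', ← map_GConj', ← Subgroup.map_commutator,
        Subgroup.map_eq_bot_iff]
      intro z hz
      have := hPQ hz
      simp only [Subgroup.mem_iInf, MonoidHom.mem_ker] at this
      exact this x hx
    have hsub : VarG I₀ ⊆ VarG (Subgroup.normalClosure {P}) ∪
        VarG (Subgroup.normalClosure {Q}) := by
      intro x hx
      rcases key x hx with h | h
      · left
        intro R hR
        exact Subgroup.normalClosure_le_normal (Set.singleton_subset_iff.mpr (show _ ∈ MonoidHom.ker (evalHom x) by simpa [MonoidHom.mem_ker] using h)) hR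
      · right
        intro R hR
        exact Subgroup.normalClosure_le_normal (Set.singleton_subset_iff.mpr (show _ ∈ MonoidHom.ker (evalHom x) by simpa [MonoidHom.mem_ker] using h)) hR
    rcases hirr _ _ Subgroup.normalClosure_normal Subgroup.normalClosure_normal hsub with
      hJ | hK
    · exact haP (hJ ha P (Subgroup.subset_normalClosure rfl))
    · exact hbQ (hK hb Q (Subgroup.subset_normalClosure rfl))
end
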